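/- arXiv:2512.09832 — 5 statements merged into one kernel-verified Lean document; each statement's English description precedes it below -/
import Mathlib

section
/- Let S and T be sets of natural numbers each at least 3, and let D_S and D_T be the disjoint unions of the cycle graphs indexed by S and T respectively. Then there exists a graph embedding of D_S into D_T if and only if S ⊆ T. In particular, if S ≠ T then D_S and D_T are not isomorphic, so there are continuum many pairwise non-isomorphic, pairwise non-embeddable such graphs. -/
open SimpleGraph

/-- The disjoint union of the cycle graphs `C_s` for `s ∈ S`: the simple graph on the sigma
type `Σ s : S, Fin s` in which two vertices are adjacent iff they lie in the same summand
`s` and are adjacent in `cycleGraph s`. -/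
def cyclesDisjointUnion (S : Set ℕ) : SimpleGraph (Σ s : S, Fin (s : ℕ)) where
  Adj x y := ∃ h : (x.1 : ℕ) = (y.1 : ℕ), (cycleGraph (y.1 : ℕ)).Adj (Fin.cast h x.2) y.2
  symm := by
    constructor
    rintro ⟨⟨s, hs⟩, i⟩ ⟨⟨t, ht⟩, j⟩ ⟨h, hadj⟩
    dsimp only at h
    subst h
    exact ⟨rfl, by simpa [Fin.ext_iff] using hadj.symm⟩
  loopless := by
    constructor
    rintro ⟨⟨s, hs⟩, i⟩ ⟨h, hadj⟩
    have : Fin.cast h i = i := by ext; rfl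
    rw [this] at hadj
    exact (cycleGraph s).irrefl hadj

/-!
An embedding `f : D_S ↪g D_T` restricts, for `s ∈ S`, to an embedding of `C_s` into `D_T`. Every
vertex has degree `2` on both sides, so the image of `C_s` is closed under adjacency in `D_T`;
being connected, it is then a whole component of `D_T`, i.e. a copy of some `C_t` with `t ∈ T`,
and counting vertices gives `s = t`.
-/

namespace SimpleGraph

variable {V W : Type*} {G : SimpleGraph V} {H : SimpleGraph W}

theorem Reachable.mem_of_forall_adj_mem {s : Set V} (hs : ∀ v ∈ s, ∀ w, G.Adj v w → w ∈ s)
    {u v : V} (huv : G.Reachable u v) (hu : u ∈ s) : v ∈ s := by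
  obtain ⟨p⟩ := huv
  induction p with
  | nil => exact hu
  | cons hadj _ ih => exact ih (hs _ hu _ hadj)

theorem Hom.range_eq_supp_of_neighborSet_subset_range (f : G →g H) (hG : G.Preconnected)
    (hf : ∀ v, H.neighborSet (f v) ⊆ Set.range f) (v : V) :
    Set.range f = (H.connectedComponentMk (f v)).supp := by
  ext w
  rw [ConnectedComponent.mem_supp_iff, ConnectedComponent.eq]
  constructor
  · rintro ⟨u, rfl⟩
    exact (hG u v).map f
  · intro hw
    refine hw.symm.mem_of_forall_adj_mem ?_ ⟨v, rfl⟩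
    rintro _ ⟨u, rfl⟩ w' hadj
    exact hf u hadj

theorem Embedding.neighborSet_subset_range_of_ncard_le (f : G ↪g H) {v : V}
    (hfin : (H.neighborSet (f v)).Finite)
    (hle : (H.neighborSet (f v)).ncard ≤ (G.neighborSet v).ncard) :
    H.neighborSet (f v) ⊆ Set.range f := by
  have himage : f '' G.neighborSet v = H.neighborSet (f v) :=
    Set.eq_of_subset_of_ncard_le (f.toHom.image_neighborSet_subset v)
      (by rwa [Set.ncard_image_of_injective _ f.injective]) hfin
  exact himage ▸ Set.image_subset_range _ _

theorem Embedding.image_neighborSet_of_neighborSet_subset_range (f : G ↪g H) {v : V}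
    (hv : H.neighborSet (f v) ⊆ Set.range f) : f '' G.neighborSet v = H.neighborSet (f v) := by
  refine (f.toHom.image_neighborSet_subset v).antisymm fun w hw => ?_
  obtain ⟨u, rfl⟩ := hv hw
  exact ⟨u, f.apply_mem_neighborSet_iff.mp hw, rfl⟩

theorem ncard_neighborSet_cycleGraph {n : ℕ} (hn : 3 ≤ n) (v : Fin n) :
    ((cycleGraph n).neighborSet v).ncard = 2 := by
  obtain ⟨m, rfl⟩ := Nat.exists_eq_add_of_le' hn
  rw [← Set.fintypeCard_eq_ncard, card_neighborSet_eq_degree, cycleGraph_degree_three_le]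

theorem ncard_neighborSet_cycleGraph_le (n : ℕ) (v : Fin n) :
    ((cycleGraph n).neighborSet v).ncard ≤ 2 := by
  match n, v with
  | 1, _ => simp [cycleGraph_one_eq_bot]
  | n + 2, v =>
    rw [cycleGraph_neighborSet]
    exact (Set.ncard_insert_le _ _).trans (by simp)

end SimpleGraph

namespace cyclesDisjointUnion

variable {S T : Set ℕ}

def incl (S : Set ℕ) (s : S) : cycleGraph s ↪g cyclesDisjointUnion S where
  toFun i := ⟨s, i⟩
  inj' := sigma_mk_injective (β := fun s : S => Fin s)
  map_rel_iff' := ⟨fun ⟨_, h⟩ => h, fun h => ⟨rfl, h⟩⟩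

theorem neighborSet_subset_range_incl (x : Σ s : S, Fin s) :
    (cyclesDisjointUnion S).neighborSet x ⊆ Set.range (incl S x.1) := by
  rintro ⟨⟨t, ht⟩, j⟩ ⟨h, -⟩
  obtain ⟨⟨s, hs⟩, i⟩ := x
  dsimp only at h
  subst h
  exact ⟨j, rfl⟩

theorem image_incl_neighborSet (x : Σ s : S, Fin s) :
    incl S x.1 '' (cycleGraph x.1).neighborSet x.2 = (cyclesDisjointUnion S).neighborSet x :=
  (incl S x.1).image_neighborSet_of_neighborSet_subset_range (v := x.2)
    (neighborSet_subset_range_incl x)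

theorem range_incl_eq_supp (s : S) (i : Fin s) :
    Set.range (incl S s) = ((cyclesDisjointUnion S).connectedComponentMk ⟨s, i⟩).supp :=
  (incl S s).toHom.range_eq_supp_of_neighborSet_subset_range cycleGraph_preconnected
    (fun j => neighborSet_subset_range_incl (S := S) ⟨s, j⟩) i

theorem subset_of_embedding (hS : ∀ s ∈ S, 3 ≤ s)
    (f : cyclesDisjointUnion S ↪g cyclesDisjointUnion T) : S ⊆ T := by
  intro s hs
  have : NeZero s := ⟨by have := hS s hs; omega⟩
  let φ : cycleGraph s ↪g cyclesDisjointUnion T := (incl S ⟨s, hs⟩).trans f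
  have hclosed (i : Fin s) : (cyclesDisjointUnion T).neighborSet (φ i) ⊆ Set.range φ := by
    refine φ.neighborSet_subset_range_of_ncard_le ?_ ?_
    · rw [← image_incl_neighborSet]
      exact (Set.toFinite _).image _
    · rw [← image_incl_neighborSet, Set.ncard_image_of_injective _ (incl T _).injective,
        ncard_neighborSet_cycleGraph (hS s hs)]
      exact ncard_neighborSet_cycleGraph_le _ _
  have hrange : Set.range φ = Set.range (incl T (φ 0).1) :=
    (φ.toHom.range_eq_supp_of_neighborSet_subset_range cycleGraph_preconnected hclosed 0).trans
      (range_incl_eq_supp _ (φ 0).2).symm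
  have hcard := congrArg Set.ncard hrange
  rw [Set.ncard_range_of_injective φ.injective,
    Set.ncard_range_of_injective (incl T _).injective, Nat.card_fin, Nat.card_fin] at hcard
  exact hcard ▸ (φ 0).1.2

def embeddingOfSubset (h : S ⊆ T) : cyclesDisjointUnion S ↪g cyclesDisjointUnion T where
  toFun x := ⟨⟨x.1, h x.1.2⟩, x.2⟩
  inj' := by
    rintro ⟨⟨s, hs⟩, i⟩ ⟨⟨s', hs'⟩, i'⟩ h
    simp only [Sigma.mk.injEq, Subtype.mk.injEq] at h ⊢
    exact h
  map_rel_iff' := Iff.rfl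

end cyclesDisjointUnion

/-- For sets `S`, `T` of naturals each at least 3, the disjoint union of
cycles `D_S` embeds into `D_T` iff `S ⊆ T`; in particular, if `S ≠ T` then `D_S` and `D_T`
are not isomorphic (whence there are continuum many pairwise non-isomorphic, pairwise
non-embeddable such graphs). -/
theorem cyclesDisjointUnion_embedding_iff_subset (S T : Set ℕ)
    (hS : ∀ s ∈ S, 3 ≤ s) (hT : ∀ t ∈ T, 3 ≤ t) :
    (Nonempty (cyclesDisjointUnion S ↪g cyclesDisjointUnion T) ↔ S ⊆ T) ∧
      (S ≠ T → ¬ Nonempty (cyclesDisjointUnion S ≃g cyclesDisjointUnion T)) :=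
  ⟨⟨fun ⟨f⟩ => cyclesDisjointUnion.subset_of_embedding hS f,
      fun h => ⟨cyclesDisjointUnion.embeddingOfSubset h⟩⟩,
    fun hne ⟨e⟩ => hne ((cyclesDisjointUnion.subset_of_embedding hS e.toEmbedding).antisymm
      (cyclesDisjointUnion.subset_of_embedding hT e.symm.toEmbedding))⟩
end

section
/- Let G be a simple graph on a countable vertex type with no induced subgraph isomorphic to pathGraph 4 (a cograph), and let u ≠ v be vertices of G. Then for every vertex w, w belongs to M(u,v), the least module containing u and v, if and only if one of the following holds: (1) w = u or w = v; (2) w witnesses that {u,v} is not a module; or (3) there exists a vertex w' with w' ≠ u and w' ≠ v such that w' witnesses that {u,v} is not a module and w witnesses that {u,w'} is not a module or that {v,w'} is not a module. -/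
open SimpleGraph

/-- A *module* of a simple graph `G` is a set `A` of vertices such that for all
`u, v ∈ A` and `w ∉ A`, `w` is adjacent to `u` iff `w` is adjacent to `v`. -/
def SimpleGraph.IsModule {V : Type*} (G : SimpleGraph V) (A : Set V) : Prop :=
  ∀ u ∈ A, ∀ v ∈ A, ∀ w ∉ A, (G.Adj w u ↔ G.Adj w v)

/-- `M(u,v)`: the intersection of all modules of `G` containing both `u` and `v`
(the least module containing `u` and `v`). -/
def SimpleGraph.minModule {V : Type*} (G : SimpleGraph V) (u v : V) : Set V :=
  ⋂₀ {A : Set V | G.IsModule A ∧ u ∈ A ∧ v ∈ A}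

/-- `w` *witnesses* that `{x, y}` is not a module: `w ≠ x`, `w ≠ y`, and `w` is adjacent
to exactly one of `x` and `y`. -/
def SimpleGraph.WitnessesNotModule {V : Type*} (G : SimpleGraph V) (w x y : V) : Prop :=
  w ≠ x ∧ w ≠ y ∧ ((G.Adj w x ∧ ¬ G.Adj w y) ∨ (¬ G.Adj w x ∧ G.Adj w y))

/-!
A module containing `x` and `y` contains every vertex witnessing that `{x, y}` is not a module,
so two rounds of adding witnesses, starting from `u, v`, stay inside `M(u, v)`. Conversely, in a
cograph the resulting set is already a module: a vertex `z` outside it sees `u`, `v` and every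
witness `w'` for `{u, v}` alike, and if `z` separated `u` from a vertex `x` that sees `u, v` alike
but separates `u` from `w'`, then `z`, `x` and two of `u, v, w'` would induce a `P₄`.
-/

namespace SimpleGraph

variable {V : Type*} {G : SimpleGraph V}

theorem nonempty_pathGraph_four_embedding {a b c d : V} (hab : G.Adj a b) (hbc : G.Adj b c)
    (hcd : G.Adj c d) (hac : ¬ G.Adj a c) (hbd : ¬ G.Adj b d) (had : ¬ G.Adj a d) :
    Nonempty (pathGraph 4 ↪g G) := by
  have hac' : a ≠ c := fun h => had (h ▸ hcd)
  have hbd' : b ≠ d := fun h => had (h ▸ hab)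
  have had' : a ≠ d := fun h => hbd (h ▸ hab.symm)
  refine ⟨⟨⟨![a, b, c, d], fun i j hij => ?_⟩, fun {i j} => ?_⟩⟩
  · fin_cases i <;> fin_cases j <;> simp_all [hab.ne, hbc.ne, hcd.ne, eq_comm]
  · change G.Adj (![a, b, c, d] i) (![a, b, c, d] j) ↔ _
    fin_cases i <;> fin_cases j <;> simp_all [pathGraph_adj, adj_comm]

theorem witnessesNotModule_iff {w x y : V} :
    G.WitnessesNotModule w x y ↔ w ≠ x ∧ w ≠ y ∧ ¬ (G.Adj w x ↔ G.Adj w y) := by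
  unfold WitnessesNotModule
  tauto

theorem adj_iff_adj_of_not_witnessesNotModule {w x y : V} (hwx : w ≠ x) (hwy : w ≠ y)
    (h : ¬ G.WitnessesNotModule w x y) : G.Adj w x ↔ G.Adj w y := by
  rw [witnessesNotModule_iff] at h
  tauto

theorem IsModule.mem_of_witnessesNotModule {A : Set V} {w x y : V} (hA : G.IsModule A)
    (hx : x ∈ A) (hy : y ∈ A) (hw : G.WitnessesNotModule w x y) : w ∈ A := by
  by_contra hwA
  exact (witnessesNotModule_iff.mp hw).2.2 (hA x hx y hy w hwA)

theorem adj_iff_adj_of_p4Free (hfree : ¬ Nonempty (pathGraph 4 ↪g G)) {u v w' x z : V}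
    (hw' : ¬ (G.Adj w' u ↔ G.Adj w' v)) (hx : G.Adj x u ↔ G.Adj x v)
    (hxw' : ¬ (G.Adj x u ↔ G.Adj x w')) (hzv : G.Adj z u ↔ G.Adj z v)
    (hzw' : G.Adj z u ↔ G.Adj z w') : G.Adj z x ↔ G.Adj z u := by
  wlog hw'u : G.Adj w' u generalizing u v
  · have hw'v : G.Adj w' v := by tauto
    refine (this (by tauto) hx.symm (by rwa [← hx]) hzv.symm (hzv.symm.trans hzw') hw'v).trans
      hzv.symm
  have hw'v : ¬ G.Adj w' v := by tauto
  by_contra hzx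
  refine hfree ?_
  -- `z` sees all or none of `u, v, w'`; either way two of them make a `P₄` with `z` and `x`.
  by_cases hzu : G.Adj z u <;> by_cases hxu : G.Adj x u
  · apply nonempty_pathGraph_four_embedding (a := x) (b := v) (c := z) (d := w') <;>
      simp_all [adj_comm]
  · apply nonempty_pathGraph_four_embedding (a := x) (b := w') (c := z) (d := v) <;>
      simp_all [adj_comm]
  · apply nonempty_pathGraph_four_embedding (a := z) (b := x) (c := u) (d := w') <;>
      simp_all [adj_comm]
  · apply nonempty_pathGraph_four_embedding (a := z) (b := x) (c := w') (d := u) <;>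
      simp_all [adj_comm]

def witnessSpan (G : SimpleGraph V) (u v : V) : Set V :=
  {w | (w = u ∨ w = v) ∨ G.WitnessesNotModule w u v ∨
    ∃ w', w' ≠ u ∧ w' ≠ v ∧ G.WitnessesNotModule w' u v ∧
      (G.WitnessesNotModule w u w' ∨ G.WitnessesNotModule w v w')}

theorem IsModule.witnessSpan_subset {A : Set V} {u v : V} (hA : G.IsModule A) (hu : u ∈ A)
    (hv : v ∈ A) : G.witnessSpan u v ⊆ A := by
  rintro w ((rfl | rfl) | hw | ⟨w', -, -, hw', hw | hw⟩)
  · exact hu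
  · exact hv
  · exact hA.mem_of_witnessesNotModule hu hv hw
  · exact hA.mem_of_witnessesNotModule hu (hA.mem_of_witnessesNotModule hu hv hw') hw
  · exact hA.mem_of_witnessesNotModule hv (hA.mem_of_witnessesNotModule hu hv hw') hw

theorem isModule_witnessSpan_of_p4Free (hfree : ¬ Nonempty (pathGraph 4 ↪g G)) (u v : V) :
    G.IsModule (G.witnessSpan u v) := by
  intro a ha b hb z hz
  have hzu : z ≠ u := fun h => hz (Or.inl (Or.inl h))
  have hzv : G.Adj z u ↔ G.Adj z v := adj_iff_adj_of_not_witnessesNotModule hzu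
    (fun h => hz (Or.inl (Or.inr h))) (fun h => hz (Or.inr (Or.inl h)))
  have hzw' : ∀ w', G.WitnessesNotModule w' u v → (G.Adj z u ↔ G.Adj z w') := fun w' hw' =>
    adj_iff_adj_of_not_witnessesNotModule hzu (fun h => hz (h ▸ Or.inr (Or.inl hw')))
      (fun h => hz (Or.inr (Or.inr ⟨w', hw'.1, hw'.2.1, hw', Or.inl h⟩)))
  suffices h : ∀ x ∈ G.witnessSpan u v, G.Adj z x ↔ G.Adj z u from
    (h a ha).trans (h b hb).symm
  intro x hx
  by_cases hx₀ : (x = u ∨ x = v) ∨ G.WitnessesNotModule x u v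
  · rcases hx₀ with (rfl | rfl) | hx₀
    exacts [Iff.rfl, hzv.symm, (hzw' x hx₀).symm]
  obtain ⟨w', -, -, hw', hxw'⟩ := (or_assoc.mpr hx).resolve_left hx₀
  simp only [not_or] at hx₀
  have hxuv := adj_iff_adj_of_not_witnessesNotModule hx₀.1.1 hx₀.1.2 hx₀.2
  refine adj_iff_adj_of_p4Free hfree (witnessesNotModule_iff.mp hw').2.2 hxuv ?_ hzv (hzw' w' hw')
  rcases hxw' with h | h
  · exact (witnessesNotModule_iff.mp h).2.2
  · rw [hxuv]; exact (witnessesNotModule_iff.mp h).2.2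

theorem minModule_eq_witnessSpan_of_p4Free (hfree : ¬ Nonempty (pathGraph 4 ↪g G)) (u v : V) :
    G.minModule u v = G.witnessSpan u v := by
  refine (Set.sInter_subset_of_mem ?_).antisymm
    (Set.subset_sInter fun _ ⟨hA, hu, hv⟩ => hA.witnessSpan_subset hu hv)
  exact ⟨isModule_witnessSpan_of_p4Free hfree u v, Or.inl (Or.inl rfl), Or.inl (Or.inr rfl)⟩

end SimpleGraph

theorem mem_minModule_iff_of_p4Free_general {V : Type*} (G : SimpleGraph V)
    (hfree : ¬ Nonempty (pathGraph 4 ↪g G)) (u v : V) (w : V) :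
    w ∈ G.minModule u v ↔
      (w = u ∨ w = v) ∨
      G.WitnessesNotModule w u v ∨
      (∃ w', w' ≠ u ∧ w' ≠ v ∧ G.WitnessesNotModule w' u v ∧
        (G.WitnessesNotModule w u w' ∨ G.WitnessesNotModule w v w')) := by
  rw [minModule_eq_witnessSpan_of_p4Free hfree]
  rfl

/-- Let `G` be a cograph (a `pathGraph 4`-free simple graph) on a
countable vertex type and `u ≠ v`. Then `w ∈ M(u,v)` iff (1) `w = u` or `w = v`, or
(2) `w` witnesses that `{u,v}` is not a module, or (3) there is `w' ≠ u, v` witnessing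
that `{u,v}` is not a module such that `w` witnesses that `{u,w'}` or `{v,w'}` is not a
module. -/
theorem mem_minModule_iff_of_p4Free {V : Type*} [Countable V] (G : SimpleGraph V)
    (hfree : ¬ Nonempty (pathGraph 4 ↪g G)) (u v : V) (huv : u ≠ v) (w : V) :
    w ∈ G.minModule u v ↔
      (w = u ∨ w = v) ∨
      G.WitnessesNotModule w u v ∨
      (∃ w', w' ≠ u ∧ w' ≠ v ∧ G.WitnessesNotModule w' u v ∧
        (G.WitnessesNotModule w u w' ∨ G.WitnessesNotModule w v w')) :=
  mem_minModule_iff_of_p4Free_general G hfree u v w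
end

section
/- For every simple graph G on a countable vertex type with no induced subgraph isomorphic to pathGraph 4 (a cograph), the automorphism group of G is not isomorphic, as a group, to the cyclic group of order 3 (ℤ/3ℤ). -/
/-!
Let `σ` be an automorphism of order 3 of a `P₄`-free graph `G`; we produce an automorphism
`τ ≠ 1` with `τ * τ = 1`, which `ℤ/3ℤ` does not have.

For `x` outside the `σ`-orbit of `y`, call `y` the partner of `x` (`Matched`) if `y` is the
point of its orbit whose adjacency to `x` differs from that of the other two. Absence of induced
`P₄` makes partners coherent: a chain of partners never returns to its starting orbit at another
point. Chains are shortened using one fact about three consecutive partner steps, proved after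
passing, if necessary, to the complement, so that orbits are independent sets and partners are
neighbours. Hence some transversal `S` of the orbits is closed under partners, and the map fixing
`S` and reflecting every orbit, `σ ^ i c ↦ σ ^ (-i) c` for `c ∈ S`, preserves adjacency: for
`a, b ∈ S`, either `b` is the partner of `a` or `a` has no partner in that orbit, and in both cases
`a` is adjacent to `σ b` iff to `σ⁻¹ b`.
-/

open SimpleGraph Equiv

theorem zpow_eq_one_or_self_or_inv {M : Type*} [Group M] {g : M} (h3 : g ^ 3 = 1) (i : ℤ) :
    g ^ i = 1 ∨ g ^ i = g ∨ g ^ i = g⁻¹ := by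
  have h3' : g ^ (3 : ℤ) = 1 := by exact_mod_cast h3
  have h2 : g ^ (2 : ℤ) = g⁻¹ := eq_inv_of_mul_eq_one_left (by rw [← zpow_add_one]; exact h3')
  rw [zpow_eq_zpow_emod i h3']
  have : i % 3 = 0 ∨ i % 3 = 1 ∨ i % 3 = 2 := by omega
  rcases this with h | h | h <;> simp [h, h2]

namespace Equiv.Perm

variable {V : Type*} {σ : Perm V}

theorem apply_apply_eq_inv_apply (h3 : σ ^ 3 = 1) (x : V) : σ (σ x) = σ⁻¹ x := by
  rw [← mul_apply, ← pow_two,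
    eq_inv_of_mul_eq_one_left (a := σ ^ 2) (b := σ) (by rw [← pow_succ]; exact h3)]

theorem inv_apply_inv_apply_eq_apply (h3 : σ ^ 3 = 1) (x : V) : σ⁻¹ (σ⁻¹ x) = σ x := by
  rw [apply_apply_eq_inv_apply (σ := σ⁻¹) (by rw [inv_pow, h3, inv_one]), inv_inv]

theorem SameCycle.eq_or_eq_apply_or_eq_inv_apply (h3 : σ ^ 3 = 1) {x y : V}
    (h : σ.SameCycle x y) : y = x ∨ y = σ x ∨ y = σ⁻¹ x := by
  obtain ⟨i, rfl⟩ := h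
  rcases zpow_eq_one_or_self_or_inv h3 i with h | h | h <;> simp [h]

def IsTransversal (σ : Perm V) (S : Set V) : Prop :=
  (∀ x, ∃ c ∈ S, σ.SameCycle c x) ∧ ∀ c ∈ S, ∀ c' ∈ S, σ.SameCycle c c' → c = c'

open Classical in
noncomputable def reflection (σ : Perm V) (S : Set V) (x : V) : V :=
  if h : ∃ p : V × ℤ, p.1 ∈ S ∧ (σ ^ p.2) p.1 = x then (σ ^ (-h.choose.2)) h.choose.1 else x

variable {S : Set V}

theorem reflection_zpow_apply (hS : σ.IsTransversal S) {c : V} (hc : c ∈ S) (i : ℤ) :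
    σ.reflection S ((σ ^ i) c) = (σ ^ (-i)) c := by
  have h : ∃ p : V × ℤ, p.1 ∈ S ∧ (σ ^ p.2) p.1 = (σ ^ i) c := ⟨(c, i), hc, rfl⟩
  rw [reflection, dif_pos h]
  obtain ⟨hmem, heq⟩ := h.choose_spec
  generalize h.choose = p at hmem heq ⊢
  obtain ⟨c', j⟩ := p
  have hshift : ∀ k : ℤ, (σ ^ (k + j)) c' = (σ ^ (k + i)) c := fun k => by
    rw [zpow_add, zpow_add, mul_apply, mul_apply, heq]
  obtain rfl : c' = c := hS.2 c' hmem c hc ⟨-i + j, by simpa using hshift (-i)⟩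
  have := (hshift (-i - j)).symm
  rwa [show -i - j + i = -j by ring, show -i - j + j = -i by ring] at this

theorem reflection_involutive (hS : σ.IsTransversal S) : Function.Involutive (σ.reflection S) := by
  intro x
  obtain ⟨c, hc, i, rfl⟩ := hS.1 x
  rw [reflection_zpow_apply hS hc, reflection_zpow_apply hS hc, neg_neg]

theorem exists_reflection_apply_ne (h3 : σ ^ 3 = 1) (hσ₁ : σ ≠ 1) (hS : σ.IsTransversal S) :
    ∃ x, σ.reflection S x ≠ x := by
  obtain ⟨x, hx⟩ : ∃ x, σ x ≠ x := by
    by_contra! h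
    exact hσ₁ (Perm.ext h)
  obtain ⟨c, hc, hcx⟩ := hS.1 x
  refine ⟨σ c, fun h => hx (hcx.apply_eq_self_iff.mp ?_)⟩
  have := reflection_zpow_apply hS hc 1
  rw [zpow_one, zpow_neg_one, h, ← apply_apply_eq_inv_apply h3] at this
  exact σ.injective this.symm

end Equiv.Perm

namespace SimpleGraph

variable {V : Type*} {G : SimpleGraph V}

def IsInducedP4 (G : SimpleGraph V) (a b c d : V) : Prop :=
  G.Adj a b ∧ G.Adj b c ∧ G.Adj c d ∧ ¬ G.Adj a c ∧ ¬ G.Adj a d ∧ ¬ G.Adj b d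

theorem IsInducedP4.ne {a b c d : V} (h : G.IsInducedP4 a b c d) : a ≠ c ∧ a ≠ d ∧ b ≠ d := by
  obtain ⟨hab, -, hcd, -, had, hbd⟩ := h
  exact ⟨by rintro rfl; exact had hcd, by rintro rfl; exact hbd hab.symm,
    by rintro rfl; exact had hab⟩

theorem IsInducedP4.of_compl {a b c d : V} (h : Gᶜ.IsInducedP4 a b c d) :
    G.IsInducedP4 b d a c := by
  obtain ⟨hac, had, hbd⟩ := h.ne
  obtain ⟨hab, hbc, hcd, hac', had', hbd'⟩ := h
  rw [compl_adj] at hab hbc hcd hac' had' hbd'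
  exact ⟨by tauto, by tauto, by tauto, fun h => hab.2 h.symm, hbc.2, fun h => hcd.2 h.symm⟩

theorem IsInducedP4.nonempty_embedding {a b c d : V} (h : G.IsInducedP4 a b c d) :
    Nonempty (pathGraph 4 ↪g G) := by
  obtain ⟨hac, had, hbd⟩ := h.ne
  obtain ⟨hab, hbc, hcd, hac', had', hbd'⟩ := h
  refine ⟨⟨⟨![a, b, c, d], fun i j hij => ?_⟩, fun {i j} => ?_⟩⟩
  · fin_cases i <;> fin_cases j <;> simp_all [hab.ne, hbc.ne, hcd.ne, eq_comm]
  · show G.Adj (![a, b, c, d] i) (![a, b, c, d] j) ↔ _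
    fin_cases i <;> fin_cases j <;> simp [pathGraph_adj, hab, hbc, hcd, hac', had', hbd',
      hab.symm, hbc.symm, hcd.symm, G.adj_comm c a, G.adj_comm d a, G.adj_comm d b]

variable {σ : Perm V}

theorem adj_zpow_apply_iff (hσ : ∀ x y, G.Adj (σ x) (σ y) ↔ G.Adj x y) (i : ℤ) (x y : V) :
    G.Adj ((σ ^ i) x) ((σ ^ i) y) ↔ G.Adj x y := by
  induction i using Int.induction_on generalizing x y with
  | zero => rfl
  | succ i ih => rw [zpow_add_one, Perm.mul_apply, Perm.mul_apply, ih, hσ]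
  | pred i ih =>
    rw [zpow_sub_one, Perm.mul_apply, Perm.mul_apply, ih]
    simpa using (hσ (σ⁻¹ x) (σ⁻¹ y)).symm

theorem adj_apply_iff_adj_inv_apply (hσ : ∀ x y, G.Adj (σ x) (σ y) ↔ G.Adj x y) (x y : V) :
    G.Adj x (σ y) ↔ G.Adj y (σ⁻¹ x) := by
  rw [← hσ y, Perm.coe_inv, apply_symm_apply, G.adj_comm]

theorem reflection_adj_iff {S : Set V} (hσ : ∀ x y, G.Adj (σ x) (σ y) ↔ G.Adj x y)
    (hS : σ.IsTransversal S)
    (hsymm : ∀ a ∈ S, ∀ b ∈ S, ∀ i : ℤ, G.Adj a ((σ ^ i) b) ↔ G.Adj a ((σ ^ (-i)) b))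
    (x y : V) : G.Adj (σ.reflection S x) (σ.reflection S y) ↔ G.Adj x y := by
  obtain ⟨a, ha, i, rfl⟩ := hS.1 x
  obtain ⟨b, hb, j, rfl⟩ := hS.1 y
  have hshift : ∀ k l : ℤ, G.Adj ((σ ^ k) a) ((σ ^ l) b) ↔ G.Adj a ((σ ^ (l - k)) b) := by
    intro k l
    rw [← adj_zpow_apply_iff hσ (-k), ← Perm.mul_apply, ← Perm.mul_apply, ← zpow_add, ← zpow_add,
      neg_add_cancel, zpow_zero, Perm.one_apply, neg_add_eq_sub]
  rw [Perm.reflection_zpow_apply hS ha, Perm.reflection_zpow_apply hS hb, hshift, hshift,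
    hsymm a ha b hb, neg_sub, sub_neg_eq_add, neg_add_eq_sub]

theorem exists_isTransversal_of_reachable {H : SimpleGraph V}
    (hσ : ∀ x y, H.Adj (σ x) (σ y) ↔ H.Adj x y)
    (hinj : ∀ x y, H.Reachable x y → σ.SameCycle x y → x = y) :
    ∃ S, σ.IsTransversal S ∧ ∀ a b, H.Adj a b → a ∈ S → b ∈ S := by
  have hmap : ∀ (i : ℤ) {x y}, H.Reachable x y → H.Reachable ((σ ^ i) x) ((σ ^ i) y) :=
    fun i _ _ h => h.map ⟨σ ^ i, (adj_zpow_apply_iff hσ i _ _).mpr⟩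
  let r : Setoid V :=
    { r := fun x y => ∃ i : ℤ, H.Reachable x ((σ ^ i) y)
      iseqv :=
        { refl := fun x => ⟨0, by simp⟩
          symm := fun ⟨i, h⟩ => ⟨-i, by simpa using (hmap (-i) h).symm⟩
          trans := fun ⟨i, h⟩ ⟨j, h'⟩ => ⟨i + j, by
            simpa [zpow_add, Perm.mul_apply] using h.trans (hmap i h')⟩ } }
  let rep : V → V := fun x => (Quotient.mk r x).out
  have rep_rel : ∀ x, r (rep x) x := fun x => Quotient.mk_out x
  have rep_eq : ∀ {x y}, r x y → rep x = rep y := fun h => congrArg Quotient.out (Quotient.sound h)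
  refine ⟨{z | H.Reachable (rep z) z}, ⟨fun x => ?_, fun c hc c' hc' ⟨k, hk⟩ => ?_⟩, ?_⟩
  · obtain ⟨i, hi⟩ := rep_rel x
    refine ⟨(σ ^ i) x, ?_, -i, by simp⟩
    show H.Reachable (rep _) _
    rwa [rep_eq (x := (σ ^ i) x) (y := x) ⟨i, Reachable.refl _⟩]
  · have hcc' : rep c' = rep c := rep_eq ⟨k, by rw [hk]⟩
    exact hinj c c' (hc.symm.trans (hcc' ▸ hc')) ⟨k, hk⟩
  · intro a b hab ha
    show H.Reachable (rep b) b
    rw [← rep_eq (x := a) ⟨0, by simpa using hab.reachable⟩]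
    exact ha.trans hab.reachable

def Matched (G : SimpleGraph V) (σ : Perm V) (x y : V) : Prop :=
  ¬ σ.SameCycle x y ∧ (G.Adj x (σ y) ↔ G.Adj x (σ⁻¹ y)) ∧ ¬ (G.Adj x y ↔ G.Adj x (σ y))

theorem Matched.ne_apply {x y : V} (h : G.Matched σ x y) : x ≠ y ∧ x ≠ σ y ∧ x ≠ σ⁻¹ y := by
  refine ⟨?_, ?_, ?_⟩ <;> rintro rfl <;> exact h.1 (by simp [Perm.SameCycle.refl])

theorem Matched.symm (hσ : ∀ x y, G.Adj (σ x) (σ y) ↔ G.Adj x y) {x y : V}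
    (h : G.Matched σ x y) : G.Matched σ y x := by
  obtain ⟨hxy, h1, h2⟩ := h
  have hyx := adj_apply_iff_adj_inv_apply hσ y x
  have hxy' := adj_apply_iff_adj_inv_apply hσ x y
  exact ⟨fun h => hxy h.symm, by rw [hyx, ← hxy']; exact h1.symm,
    by rw [hyx, G.adj_comm, ← h1]; exact h2⟩

theorem matched_apply_iff (hσ : ∀ x y, G.Adj (σ x) (σ y) ↔ G.Adj x y) {x y : V} :
    G.Matched σ (σ x) (σ y) ↔ G.Matched σ x y := by
  have hx : ∀ z, G.Adj (σ x) z ↔ G.Adj x (σ⁻¹ z) := fun z => by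
    rw [← hσ x, Perm.coe_inv, apply_symm_apply]
  simp only [Matched, hx, Perm.sameCycle_apply_left, Perm.sameCycle_apply_right, Perm.coe_inv,
    symm_apply_apply]

theorem matched_inv_iff {x y : V} : G.Matched σ⁻¹ x y ↔ G.Matched σ x y := by
  simp only [Matched, Perm.sameCycle_inv, inv_inv]
  tauto

theorem matched_compl_iff {x y : V} : Gᶜ.Matched σ x y ↔ G.Matched σ x y := by
  have key : ∀ {H K : SimpleGraph V}, (∀ z, x ≠ z → (H.Adj x z ↔ ¬ K.Adj x z)) →
      K.Matched σ x y → H.Matched σ x y := by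
    intro H K hHK h
    obtain ⟨hy, hσy, hσ'y⟩ := h.ne_apply
    obtain ⟨h0, h1, h2⟩ := h
    rw [Matched, hHK _ hy, hHK _ hσy, hHK _ hσ'y]
    exact ⟨h0, not_congr h1, fun h => h2 (not_iff_not.mp h)⟩
  exact ⟨key fun z hz => by simp [compl_adj, hz], key fun z hz => by simp [compl_adj, hz]⟩

theorem Matched.eq_of_sameCycle (h3 : σ ^ 3 = 1) {x y y' : V} (h : G.Matched σ x y)
    (h' : G.Matched σ x y') (hy : σ.SameCycle y y') : y = y' := by
  obtain ⟨-, h1, h2⟩ := h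
  obtain ⟨-, h1', h2'⟩ := h'
  rcases hy.eq_or_eq_apply_or_eq_inv_apply h3 with rfl | rfl | rfl
  · rfl
  · rw [Perm.apply_apply_eq_inv_apply h3, show σ⁻¹ (σ y) = y by simp] at h1'
    tauto
  · rw [Perm.inv_apply_inv_apply_eq_apply h3, show σ (σ⁻¹ y) = y by simp] at h1'
    tauto

theorem adj_inv_apply_iff (hσ : ∀ x y, G.Adj (σ x) (σ y) ↔ G.Adj x y) (x y : V) :
    G.Adj (σ⁻¹ x) (σ⁻¹ y) ↔ G.Adj x y := by
  simpa using adj_zpow_apply_iff hσ (-1) x y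

theorem Matched.not_adj_apply_of_not_adj_apply (hfree : ∀ a b c d, ¬ G.IsInducedP4 a b c d)
    (hσ : ∀ x y, G.Adj (σ x) (σ y) ↔ G.Adj x y) {x y : V} (hx : ¬ G.Adj x (σ x))
    (h : G.Matched σ x y) : ¬ G.Adj y (σ y) := by
  obtain ⟨-, h1, h2⟩ := h
  have hyx := adj_apply_iff_adj_inv_apply hσ y x
  intro hy
  by_cases hxy : G.Adj x y
  · exact hfree x y (σ y) (σ x) ⟨hxy, hy, (hσ y x).mpr hxy.symm, by tauto, hx, by tauto⟩
  · exact hfree x (σ y) y (σ x) ⟨by tauto, hy.symm, by tauto, hxy, hx,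
      fun h => hxy ((hσ y x).mp h).symm⟩

theorem Matched.adj_of_not_adj_apply (hfree : ∀ a b c d, ¬ G.IsInducedP4 a b c d)
    (hσ : ∀ x y, G.Adj (σ x) (σ y) ↔ G.Adj x y) (h3 : σ ^ 3 = 1) {x y : V}
    (hx : ¬ G.Adj x (σ x)) (h : G.Matched σ x y) : G.Adj x y := by
  have hy := h.not_adj_apply_of_not_adj_apply hfree hσ hx
  obtain ⟨-, h1, h2⟩ := h
  have hx' : ¬ G.Adj x (σ⁻¹ x) := by rwa [← adj_apply_iff_adj_inv_apply hσ]
  have e1 : G.Adj (σ y) (σ⁻¹ x) ↔ G.Adj x (σ⁻¹ y) := by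
    rw [← adj_apply_iff_adj_inv_apply hσ, Perm.apply_apply_eq_inv_apply h3]
  have e2 : G.Adj (σ⁻¹ x) y ↔ G.Adj x (σ y) := by
    rw [G.adj_comm, adj_apply_iff_adj_inv_apply hσ x y]
  by_contra hxy
  exact hfree x (σ y) (σ⁻¹ x) y ⟨by tauto, by tauto, by tauto, hx', hxy, fun h => hy h.symm⟩

theorem Matched.not_adj_apply_of_matched (hfree : ∀ a b c d, ¬ G.IsInducedP4 a b c d)
    (hσ : ∀ x y, G.Adj (σ x) (σ y) ↔ G.Adj x y) (h3 : σ ^ 3 = 1) {x₀ x₁ x₂ : V}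
    (hx₀ : ¬ G.Adj x₀ (σ x₀)) (h₀₁ : G.Matched σ x₀ x₁) (h₁₂ : G.Matched σ x₁ x₂) :
    ¬ G.Adj x₀ (σ x₂) := by
  have hx₁ := h₀₁.not_adj_apply_of_not_adj_apply hfree hσ hx₀
  have a₀₁ := h₀₁.adj_of_not_adj_apply hfree hσ h3 hx₀
  have a₁₂ := h₁₂.adj_of_not_adj_apply hfree hσ h3 hx₁
  intro a₀₂
  exact hfree x₁ x₀ (σ x₂) (σ x₁) ⟨a₀₁.symm, a₀₂, (hσ x₂ x₁).mpr a₁₂.symm,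
    fun h => h₁₂.2.2 (iff_of_true a₁₂ h), hx₁, fun h => h₀₁.2.2 (iff_of_true a₀₁ h)⟩

theorem Matched.not_adj_inv_apply_of_matched (hfree : ∀ a b c d, ¬ G.IsInducedP4 a b c d)
    (hσ : ∀ x y, G.Adj (σ x) (σ y) ↔ G.Adj x y) (h3 : σ ^ 3 = 1) {x₀ x₁ x₂ : V}
    (hx₀ : ¬ G.Adj x₀ (σ x₀)) (h₀₁ : G.Matched σ x₀ x₁) (h₁₂ : G.Matched σ x₁ x₂) :
    ¬ G.Adj x₀ (σ⁻¹ x₂) :=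
  (matched_inv_iff.mpr h₀₁).not_adj_apply_of_matched hfree (adj_inv_apply_iff hσ)
    (by rw [inv_pow, h3, inv_one]) (by rwa [← adj_apply_iff_adj_inv_apply hσ])
    (matched_inv_iff.mpr h₁₂)

theorem Matched.matched_of_adj (hfree : ∀ a b c d, ¬ G.IsInducedP4 a b c d)
    (hσ : ∀ x y, G.Adj (σ x) (σ y) ↔ G.Adj x y) (h3 : σ ^ 3 = 1) {x₀ x₁ x₂ : V}
    (hx₀ : ¬ G.Adj x₀ (σ x₀)) (h₀₁ : G.Matched σ x₀ x₁) (h₁₂ : G.Matched σ x₁ x₂)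
    (s₀₂ : ¬ σ.SameCycle x₀ x₂) (a₀₂ : G.Adj x₀ x₂) : G.Matched σ x₀ x₂ :=
  have n := h₀₁.not_adj_apply_of_matched hfree hσ h3 hx₀ h₁₂
  ⟨s₀₂, iff_of_false n (h₀₁.not_adj_inv_apply_of_matched hfree hσ h3 hx₀ h₁₂),
    fun h => n (h.mp a₀₂)⟩

theorem Matched.not_adj_apply_of_matched_of_matched (hfree : ∀ a b c d, ¬ G.IsInducedP4 a b c d)
    (hσ : ∀ x y, G.Adj (σ x) (σ y) ↔ G.Adj x y) (h3 : σ ^ 3 = 1) {x₀ x₁ x₂ x₃ : V}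
    (hx₀ : ¬ G.Adj x₀ (σ x₀)) (h₀₁ : G.Matched σ x₀ x₁) (h₁₂ : G.Matched σ x₁ x₂)
    (h₂₃ : G.Matched σ x₂ x₃) (n₀₂ : ¬ G.Adj x₀ x₂) : ¬ G.Adj x₀ (σ x₃) := by
  have hx₁ := h₀₁.not_adj_apply_of_not_adj_apply hfree hσ hx₀
  have hx₂ := h₁₂.not_adj_apply_of_not_adj_apply hfree hσ hx₁
  have a₂₃ := h₂₃.adj_of_not_adj_apply hfree hσ h3 hx₂
  intro a₀₃
  exact hfree (σ x₃) x₀ x₁ x₂ ⟨a₀₃.symm, h₀₁.adj_of_not_adj_apply hfree hσ h3 hx₀,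
    h₁₂.adj_of_not_adj_apply hfree hσ h3 hx₁,
    fun h => h₁₂.not_adj_apply_of_matched hfree hσ h3 hx₁ h₂₃ h.symm,
    fun h => h₂₃.2.2 (iff_of_true a₂₃ h.symm), n₀₂⟩

theorem Matched.matched_of_matched_of_matched_of_not_adj_apply
    (hfree : ∀ a b c d, ¬ G.IsInducedP4 a b c d)
    (hσ : ∀ x y, G.Adj (σ x) (σ y) ↔ G.Adj x y) (h3 : σ ^ 3 = 1) {x₀ x₁ x₂ x₃ : V}
    (hx₀ : ¬ G.Adj x₀ (σ x₀)) (h₀₁ : G.Matched σ x₀ x₁) (h₁₂ : G.Matched σ x₁ x₂)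
    (h₂₃ : G.Matched σ x₂ x₃) (s₀₂ : ¬ σ.SameCycle x₀ x₂) (m₀₂ : ¬ G.Matched σ x₀ x₂)
    (s₁₃ : ¬ σ.SameCycle x₁ x₃) (m₁₃ : ¬ G.Matched σ x₁ x₃) : G.Matched σ x₀ x₃ := by
  have hx₁ := h₀₁.not_adj_apply_of_not_adj_apply hfree hσ hx₀
  have n₀₂ : ¬ G.Adj x₀ x₂ := fun h => m₀₂ (h₀₁.matched_of_adj hfree hσ h3 hx₀ h₁₂ s₀₂ h)
  have n₁₃ : ¬ G.Adj x₁ x₃ := fun h => m₁₃ (h₁₂.matched_of_adj hfree hσ h3 hx₁ h₂₃ s₁₃ h)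
  have a₀₃ : G.Adj x₀ x₃ := by
    by_contra h
    exact hfree x₀ x₁ x₂ x₃ ⟨h₀₁.adj_of_not_adj_apply hfree hσ h3 hx₀,
      h₁₂.adj_of_not_adj_apply hfree hσ h3 hx₁,
      h₂₃.adj_of_not_adj_apply hfree hσ h3 (h₁₂.not_adj_apply_of_not_adj_apply hfree hσ hx₁),
      n₀₂, h, n₁₃⟩
  have n := h₀₁.not_adj_apply_of_matched_of_matched hfree hσ h3 hx₀ h₁₂ h₂₃ n₀₂
  have n' : ¬ G.Adj x₀ (σ⁻¹ x₃) :=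
    (matched_inv_iff.mpr h₀₁).not_adj_apply_of_matched_of_matched hfree (adj_inv_apply_iff hσ)
      (by rw [inv_pow, h3, inv_one]) (by rwa [← adj_apply_iff_adj_inv_apply hσ])
      (matched_inv_iff.mpr h₁₂) (matched_inv_iff.mpr h₂₃) n₀₂
  refine ⟨fun hs => ?_, iff_of_false n n', fun h => n (h.mp a₀₃)⟩
  rcases hs.eq_or_eq_apply_or_eq_inv_apply h3 with h | h | h <;> rw [h] at a₀₃
  exacts [G.irrefl a₀₃, hx₀ a₀₃, hx₀ ((adj_apply_iff_adj_inv_apply hσ x₀ x₀).mpr a₀₃)]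

theorem Matched.matched_of_matched_of_matched (hfree : ∀ a b c d, ¬ G.IsInducedP4 a b c d)
    (hσ : ∀ x y, G.Adj (σ x) (σ y) ↔ G.Adj x y) (h3 : σ ^ 3 = 1) {x₀ x₁ x₂ x₃ : V}
    (h₀₁ : G.Matched σ x₀ x₁) (h₁₂ : G.Matched σ x₁ x₂) (h₂₃ : G.Matched σ x₂ x₃)
    (s₀₂ : ¬ σ.SameCycle x₀ x₂) (m₀₂ : ¬ G.Matched σ x₀ x₂)
    (s₁₃ : ¬ σ.SameCycle x₁ x₃) (m₁₃ : ¬ G.Matched σ x₁ x₃) : G.Matched σ x₀ x₃ := by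
  by_cases hx₀ : G.Adj x₀ (σ x₀)
  · -- pass to `Gᶜ`: same partners, still `P₄`-free, and the orbit of `x₀` becomes independent
    have hσ' : ∀ x y, Gᶜ.Adj (σ x) (σ y) ↔ Gᶜ.Adj x y := fun x y => by simp [compl_adj, hσ]
    rw [← matched_compl_iff] at h₀₁ h₁₂ h₂₃ m₀₂ m₁₃ ⊢
    exact h₀₁.matched_of_matched_of_matched_of_not_adj_apply
      (fun a b c d h => hfree _ _ _ _ h.of_compl) hσ' h3 (by simp [compl_adj, hx₀])
      h₁₂ h₂₃ s₀₂ m₀₂ s₁₃ m₁₃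
  · exact h₀₁.matched_of_matched_of_matched_of_not_adj_apply hfree hσ h3 hx₀ h₁₂ h₂₃ s₀₂ m₀₂ s₁₃ m₁₃

theorem eq_of_reachable_of_sameCycle (hfree : ∀ a b c d, ¬ G.IsInducedP4 a b c d)
    (hσ : ∀ x y, G.Adj (σ x) (σ y) ↔ G.Adj x y) (h3 : σ ^ 3 = 1) {x y : V}
    (h : (fromRel (G.Matched σ)).Reachable x y) (hxy : σ.SameCycle x y) : x = y := by
  have matched : ∀ {a b}, (fromRel (G.Matched σ)).Adj a b → G.Matched σ a b :=
    fun h => h.2.elim id (Matched.symm hσ)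
  have adj : ∀ {a b}, G.Matched σ a b → (fromRel (G.Matched σ)).Adj a b :=
    fun h => ⟨h.ne_apply.1, Or.inl h⟩
  obtain ⟨p⟩ := h
  suffices ∀ n (p : (fromRel (G.Matched σ)).Walk x y), p.length ≤ n → x = y from this _ p le_rfl
  intro n
  -- each case below shortens the walk, keeping its endpoints
  induction n with
  | zero => intro p hp; cases p with | nil => rfl | cons _ _ => simp at hp
  | succ n ih =>
    intro p hp
    cases p with
    | nil => rfl
    | @cons _ x₁ _ a₀₁ p =>
      cases p with
      | nil => exact absurd hxy (matched a₀₁).1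
      | @cons _ x₂ _ a₁₂ q =>
        simp only [Walk.length_cons] at hp
        by_cases s₀₂ : σ.SameCycle x x₂
        · obtain rfl : x₂ = x := (matched a₁₂).eq_of_sameCycle h3 ((matched a₀₁).symm hσ) s₀₂.symm
          exact ih q (by omega)
        by_cases m₀₂ : G.Matched σ x x₂
        · exact ih (.cons (adj m₀₂) q) (by simp only [Walk.length_cons]; omega)
        cases q with
        | nil => exact absurd hxy s₀₂
        | @cons _ x₃ _ a₂₃ q =>
          simp only [Walk.length_cons] at hp
          by_cases s₁₃ : σ.SameCycle x₁ x₃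
          · obtain rfl : x₃ = x₁ :=
              (matched a₂₃).eq_of_sameCycle h3 ((matched a₁₂).symm hσ) s₁₃.symm
            exact ih (.cons a₀₁ q) (by simp only [Walk.length_cons]; omega)
          by_cases m₁₃ : G.Matched σ x₁ x₃
          · exact ih (.cons a₀₁ (.cons (adj m₁₃) q)) (by simp only [Walk.length_cons]; omega)
          · refine ih (.cons (adj ?_) q) (by simp only [Walk.length_cons]; omega)
            exact (matched a₀₁).matched_of_matched_of_matched hfree hσ h3 (matched a₁₂)
              (matched a₂₃) s₀₂ m₀₂ s₁₃ m₁₃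

theorem adj_apply_iff_adj_inv_apply_of_mem (hσ : ∀ x y, G.Adj (σ x) (σ y) ↔ G.Adj x y)
    (h3 : σ ^ 3 = 1) {S : Set V} (hS : σ.IsTransversal S)
    (hclosed : ∀ a b, G.Matched σ a b → a ∈ S → b ∈ S) {a b : V} (ha : a ∈ S) (hb : b ∈ S) :
    G.Adj a (σ b) ↔ G.Adj a (σ⁻¹ b) := by
  by_contra hne
  have hab : ¬ σ.SameCycle a b := fun hs => by
    obtain rfl := hS.2 a ha b hb hs
    exact hne (adj_apply_iff_adj_inv_apply hσ a a)
  suffices ∃ b', σ.SameCycle b b' ∧ G.Matched σ a b' by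
    obtain ⟨b', hs, hm⟩ := this
    obtain rfl := hS.2 b hb b' (hclosed a b' hm ha) hs
    exact hne hm.2.1
  by_cases h₀ : G.Adj a b ↔ G.Adj a (σ b)
  · refine ⟨σ⁻¹ b, by simp [Perm.SameCycle.refl], by simpa using hab, ?_⟩
    rw [Perm.inv_apply_inv_apply_eq_apply h3, show σ (σ⁻¹ b) = b by simp]
    tauto
  · refine ⟨σ b, by simp [Perm.SameCycle.refl], by simpa using hab, ?_⟩
    rw [Perm.apply_apply_eq_inv_apply h3, show σ⁻¹ (σ b) = b by simp]
    tauto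

theorem exists_involutive_perm_of_pow_three (hfree : ∀ a b c d, ¬ G.IsInducedP4 a b c d)
    (hσ : ∀ x y, G.Adj (σ x) (σ y) ↔ G.Adj x y) (h3 : σ ^ 3 = 1) (hσ₁ : σ ≠ 1) :
    ∃ τ : Perm V, τ ≠ 1 ∧ τ * τ = 1 ∧ ∀ x y, G.Adj (τ x) (τ y) ↔ G.Adj x y := by
  have hM : ∀ x y, (fromRel (G.Matched σ)).Adj (σ x) (σ y) ↔ (fromRel (G.Matched σ)).Adj x y :=
    fun x y => by simp only [fromRel_adj, matched_apply_iff hσ, σ.injective.ne_iff]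
  obtain ⟨S, hS, hclosed⟩ := exists_isTransversal_of_reachable hM
    (fun x y h hxy => eq_of_reachable_of_sameCycle hfree hσ h3 h hxy)
  have hclosed' : ∀ a b, G.Matched σ a b → a ∈ S → b ∈ S :=
    fun a b h => hclosed a b ⟨h.ne_apply.1, Or.inl h⟩
  have hsymm : ∀ a ∈ S, ∀ b ∈ S, ∀ i : ℤ, G.Adj a ((σ ^ i) b) ↔ G.Adj a ((σ ^ (-i)) b) := by
    intro a ha b hb i
    have := adj_apply_iff_adj_inv_apply_of_mem hσ h3 hS hclosed' ha hb
    rcases zpow_eq_one_or_self_or_inv h3 i with h | h | h <;> simp [zpow_neg, h, this]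
  refine ⟨(Perm.reflection_involutive hS).toPerm, fun h => ?_,
    Perm.ext (Perm.reflection_involutive hS), reflection_adj_iff hσ hS hsymm⟩
  obtain ⟨x, hx⟩ := Perm.exists_reflection_apply_ne h3 hσ₁ hS
  exact hx (by simpa using congrArg (· x) h)

theorem exists_involution_of_pow_three (hfree : ¬ Nonempty (pathGraph 4 ↪g G)) (φ : G ≃g G)
    (h3 : φ ^ 3 = 1) (hφ : φ ≠ 1) : ∃ τ : G ≃g G, τ ≠ 1 ∧ τ * τ = 1 := by
  have hpow : ∀ n : ℕ, ∀ x, (φ.toEquiv ^ n) x = (φ ^ n) x := by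
    intro n x
    induction n with
    | zero => rfl
    | succ n ih => rw [pow_succ', pow_succ', Perm.mul_apply, RelIso.mul_apply, ih]; rfl
  obtain ⟨τ, hτ₁, hτ₂, hτ⟩ := exists_involutive_perm_of_pow_three
    (fun a b c d h => hfree h.nonempty_embedding) (σ := φ.toEquiv) (fun x y => φ.map_adj_iff)
    (Perm.ext fun x => by rw [hpow, h3]; rfl)
    (fun h => hφ (RelIso.ext fun x => by simpa using congrArg (· x) h))
  refine ⟨⟨τ, hτ _ _⟩, fun h => hτ₁ (Perm.ext fun x => ?_), RelIso.ext fun x => ?_⟩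
  · simpa using congrArg (· x) h
  · simpa using congrArg (· x) hτ₂

end SimpleGraph

theorem aut_cograph_not_zmod_three_general {V : Type*}
    (G : SimpleGraph V) (hfree : ¬ Nonempty (pathGraph 4 ↪g G)) :
    ¬ Nonempty ((G ≃g G) ≃* Multiplicative (ZMod 3)) := by
  rintro ⟨e⟩
  obtain ⟨τ, hτ₁, hτ₂⟩ := exists_involution_of_pow_three hfree (e.symm (.ofAdd 1))
    (by rw [← map_pow, show (Multiplicative.ofAdd (1 : ZMod 3)) ^ 3 = 1 from rfl, map_one])
    (by rw [Ne, MulEquiv.map_eq_one_iff]; decide)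
  have h_two_torsion : ∀ y : Multiplicative (ZMod 3), y * y = 1 → y = 1 := by decide
  exact hτ₁ (e.map_eq_one_iff.mp (h_two_torsion _ (by rw [← map_mul, hτ₂, map_one])))

/-- For every cograph `G` (a `pathGraph 4`-free simple graph) on a
countable vertex type, the automorphism group `G ≃g G` of `G` is not isomorphic, as a
group, to the cyclic group of order 3 (`ℤ/3ℤ`). -/
theorem aut_cograph_not_zmod_three {V : Type*} [Countable V]
    (G : SimpleGraph V) (hfree : ¬ Nonempty (pathGraph 4 ↪g G)) :
    ¬ Nonempty ((G ≃g G) ≃* Multiplicative (ZMod 3)) :=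
  aut_cograph_not_zmod_three_general G hfree
end

section
/- For a partial order P, let L(P) be the partial order on the disjoint sum P ⊕ (P × ℕ) defined by: inl p ≤ inl q iff p ≤ q in P; inl p ≤ inr (q, n) iff p ≤ q in P; inr (p, n) ≤ inr (q, m) iff p = q and n = m; and never inr (p, n) ≤ inl q. (L(P) is obtained from P by attaching infinitely many new maximal elements above each point of P.) Then for any partial orders P and Q, L(P) is order-isomorphic to L(Q) if and only if P is order-isomorphic to Q. -/
/-- The carrier of `L(P)`: the disjoint sum `P ⊕ (P × ℕ)` (a type synonym, so that we can
endow it with the order described below). -/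
def LType (P : Type*) : Type _ := P ⊕ (P × ℕ)

/-- The order `L(P)` on `P ⊕ (P × ℕ)`: `inl p ≤ inl q` iff `p ≤ q`; `inl p ≤ inr (q, n)`
iff `p ≤ q`; `inr (p, n) ≤ inr (q, m)` iff `p = q ∧ n = m`; and never
`inr (p, n) ≤ inl q`. This attaches infinitely many new maximal elements above each point
of `P`. -/
instance LType.instPartialOrder (P : Type*) [PartialOrder P] : PartialOrder (LType P) where
  le x y :=
    match x, y with
    | .inl p, .inl q => p ≤ q
    | .inl p, .inr (q, _) => p ≤ q
    | .inr (p, n), .inr (q, m) => p = q ∧ n = m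
    | .inr _, .inl _ => False
  le_refl x := by cases x with
    | inl p => exact le_refl p
    | inr p => exact ⟨rfl, rfl⟩
  le_trans x y z hxy hyz := by
    cases x with
    | inl p =>
      cases y with
      | inl q =>
        cases z with
        | inl r => exact le_trans hxy hyz
        | inr r => exact le_trans hxy hyz
      | inr q =>
        cases z with
        | inl r => exact absurd hyz (by cases q; exact not_false)
        | inr r =>
          obtain ⟨q1, q2⟩ := q
          obtain ⟨r1, r2⟩ := r
          obtain ⟨h1, h2⟩ := hyz
          exact le_trans hxy (le_of_eq h1)
    | inr p =>
      cases y with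
      | inl q => exact absurd hxy (by cases p; exact not_false)
      | inr q =>
        cases z with
        | inl r => exact absurd hyz (by cases q; exact not_false)
        | inr r =>
          obtain ⟨p1, p2⟩ := p
          obtain ⟨q1, q2⟩ := q
          obtain ⟨r1, r2⟩ := r
          obtain ⟨h1, h2⟩ := hxy
          obtain ⟨h3, h4⟩ := hyz
          exact ⟨h1.trans h3, h2.trans h4⟩
  le_antisymm x y hxy hyx := by
    cases x with
    | inl p =>
      cases y with
      | inl q => exact congrArg Sum.inl (le_antisymm hxy hyx)
      | inr q => exact absurd hyx (by cases q; exact not_false)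
    | inr p =>
      cases y with
      | inl q => exact absurd hxy (by cases p; exact not_false)
      | inr q =>
        obtain ⟨p1, p2⟩ := p
        obtain ⟨q1, q2⟩ := q
        obtain ⟨h1, h2⟩ := hxy
        exact congrArg Sum.inr (by rw [h1, h2])

/-!
The points of `P` are exactly the non-maximal elements of `L(P)`: every new point is maximal,
while `inl p < inr (p, 0)`. Being non-maximal is invariant under order isomorphisms, so
`L(P) ≃o L(Q)` restricts to `P ≃o Q`; conversely `P ≃o Q` extends to `L(P) ≃o L(Q)` by acting
as the identity on `ℕ`.
-/

def OrderIso.setOfNotIsMaxCongr {α β : Type*} [Preorder α] [Preorder β] (e : α ≃o β) :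
    {x : α | ¬IsMax x} ≃o {y : β | ¬IsMax y} where
  toEquiv := e.toEquiv.subtypeEquiv fun _ => e.isMax_apply.not.symm
  map_rel_iff' := e.le_iff_le

namespace LType

variable {P Q : Type*} [PartialOrder P] [PartialOrder Q]

def inl : P ↪o LType P :=
  OrderEmbedding.ofMapLEIff Sum.inl fun _ _ => Iff.rfl

def leaf (p : P) (n : ℕ) : LType P := Sum.inr (p, n)

theorem isMax_leaf (p : P) (n : ℕ) : IsMax (leaf p n) := by
  rintro (q | ⟨q, m⟩) h
  · exact (h : False).elim
  · obtain ⟨rfl, rfl⟩ := h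
    exact le_rfl

theorem not_isMax_inl (p : P) : ¬IsMax (inl p) := fun h =>
  (h (show inl p ≤ leaf p 0 from le_refl p) : False)

theorem range_inl : Set.range (inl : P ↪o LType P) = {x | ¬IsMax x} := by
  ext (p | ⟨p, n⟩)
  · exact iff_of_true ⟨p, rfl⟩ (not_isMax_inl p)
  · exact iff_of_false (fun ⟨_, h⟩ => Sum.inl_ne_inr h) (not_not.2 (isMax_leaf p n))

variable (P) in
noncomputable def orderIsoSetOfNotIsMax :
    P ≃o {x : LType P | ¬IsMax x} :=
  inl.orderIso.trans (OrderIso.setCongr _ _ range_inl)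

def congr (e : P ≃o Q) : LType P ≃o LType Q where
  toEquiv := e.toEquiv.sumCongr (e.toEquiv.prodCongr (Equiv.refl ℕ))
  map_rel_iff' := by
    rintro (p | ⟨p, n⟩) (q | ⟨q, m⟩)
    · exact e.le_iff_le
    · exact e.le_iff_le
    · exact Iff.rfl
    · exact and_congr_left' e.injective.eq_iff

end LType

/-- For partial orders `P` and `Q`, the order `L(P)` (obtained from `P`
by attaching infinitely many new maximal elements above each point of `P`) is
order-isomorphic to `L(Q)` if and only if `P` is order-isomorphic to `Q`. -/
theorem lType_orderIso_iff {P Q : Type*} [PartialOrder P] [PartialOrder Q] :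
    Nonempty (LType P ≃o LType Q) ↔ Nonempty (P ≃o Q) := by
  constructor
  · rintro ⟨e⟩
    exact ⟨(LType.orderIsoSetOfNotIsMax P).trans
      (e.setOfNotIsMaxCongr.trans (LType.orderIsoSetOfNotIsMax Q).symm)⟩
  · rintro ⟨e⟩
    exact ⟨LType.congr e⟩
end

section
/- Let T and T' be finite decomposition trees with labelings ℓ and ℓ', and let G(T) and G(T') be their associated cographs (the graphs whose vertices are the leaves, with two distinct leaves adjacent iff their meet is labeled 1). Then there exists a graph embedding of G(T) into G(T') if and only if there exists an injective order-embedding f from T into T' (t ≤ s iff f(t) ≤ f(s)) such that ℓ'(f(t)) = ℓ(t) for every node t of T, and for all leaves v, w of T, ℓ'(f(v) ⊓ f(w)) = ℓ(v ⊓ w), where ⊓ denotes the meet in the respective tree. -/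
/-!
A tree embedding restricts to a graph embedding on the leaves, since adjacency of two leaves is
read off the label of their meet. Conversely, a graph embedding `g` preserves the labels of meets
of leaves (both labels lie in `{0, 1}` and are `1` together), and it extends to all nodes by
sending `t` to the meet of the images of the leaves above `t`. In a tree this meet is already the
meet of two of those images, and comparing the pair with the image of a leaf branching off at `t`
shows that labels are preserved. The extension reflects the order because labels change along
every cover: if `f t ≤ g w` but `t ≰ w`, the child `r` of `t ⊓ w` towards `t` would carry the
label of `t ⊓ w`.
-/

open SimpleGraph

/-- `ℓ : T → Fin 3` is a decomposition-tree labeling of the finite meet-semilattice `T`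
with least element (the root): the predecessors of every element are linearly ordered
(so `T` is a tree whose pairwise meets exist); a node is labeled `2` iff it is maximal
(a leaf); every non-leaf has at least two immediate successors (covers); and labels of
non-leaves alternate: a non-leaf cover of a node labeled `1` (resp. `0`) is labeled `0`
(resp. `1`). -/
def IsFiniteDecompTree {T : Type*} [SemilatticeInf T] [OrderBot T] (ℓ : T → Fin 3) :
    Prop :=
  (∀ t a b : T, a ≤ t → b ≤ t → a ≤ b ∨ b ≤ a) ∧
  (∀ t : T, ℓ t = 2 ↔ IsMax t) ∧
  (∀ t : T, ¬ IsMax t → ∃ a b : T, a ≠ b ∧ t ⋖ a ∧ t ⋖ b) ∧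
  (∀ t s : T, t ⋖ s → ¬ IsMax t → ¬ IsMax s →
    (ℓ t = 1 → ℓ s = 0) ∧ (ℓ t = 0 → ℓ s = 1))

/-- The cograph `G(T)` of a labeled decomposition tree: its vertices are the leaves
(maximal elements) of `T`, and two distinct leaves are adjacent iff their meet is
labeled `1`. -/
def cographOf {T : Type*} [SemilatticeInf T] (ℓ : T → Fin 3) :
    SimpleGraph {t : T // IsMax t} where
  Adj v w := v ≠ w ∧ ℓ ((v : T) ⊓ (w : T)) = 1
  symm := ⟨by
    rintro v w ⟨hne, hlab⟩
    exact ⟨hne.symm, by rwa [inf_comm]⟩⟩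
  loopless := ⟨fun v h => h.1 rfl⟩

lemma exists_le_isMax {β : Type*} [Preorder β] [Finite β] (a : β) : ∃ b, a ≤ b ∧ IsMax b := by
  obtain ⟨b, hab, hb⟩ := Finite.exists_le_maximal (p := fun _ : β => True) (a := a) trivial
  exact ⟨b, hab, fun c hc => hb.2 trivial hc⟩

def IsTreeOrder (α : Type*) [Preorder α] : Prop :=
  ∀ t a b : α, a ≤ t → b ≤ t → a ≤ b ∨ b ≤ a

section Tree

variable {α : Type*} [SemilatticeInf α]

lemma not_isMax_inf {a b : α} (hab : a ≠ b) : ¬ IsMax (a ⊓ b) := fun h =>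
  hab ((h.eq_of_le inf_le_left).symm.trans (h.eq_of_le inf_le_right))

lemma IsTreeOrder.inf_le_or_inf_le (htree : IsTreeOrder α) (a b c : α) : a ⊓ c ≤ b ∨ b ⊓ c ≤ a :=
  (htree c (a ⊓ c) (b ⊓ c) inf_le_right inf_le_right).imp
    (fun h => h.trans inf_le_left) (fun h => h.trans inf_le_left)

lemma IsTreeOrder.inf_eq_inf_or_inf_eq_inf (htree : IsTreeOrder α) {a b c : α}
    (hc : a ⊓ b ≤ c) : a ⊓ b = a ⊓ c ∨ a ⊓ b = b ⊓ c :=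
  (htree.inf_le_or_inf_le a b c).imp
    (fun h => le_antisymm (le_inf inf_le_left hc) (le_inf inf_le_left h))
    (fun h => le_antisymm (le_inf inf_le_right hc) (le_inf h inf_le_left))

lemma IsTreeOrder.exists_inf'_eq_inf (htree : IsTreeOrder α) {ι : Type*} {s : Finset ι}
    (hs : s.Nonempty) (f : ι → α) :
    ∃ i ∈ s, ∃ j ∈ s, s.inf' hs f = f i ⊓ f j := by
  induction hs using Finset.Nonempty.cons_induction with
  | singleton a =>
    exact ⟨a, Finset.mem_singleton_self a, a, Finset.mem_singleton_self a, by simp⟩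
  | cons a s _ hs ih =>
    obtain ⟨i, hi, j, hj, hij⟩ := ih
    rw [Finset.inf'_cons hs, hij]
    rcases htree.inf_le_or_inf_le (f i) (f j) (f a) with h | h
    · refine ⟨a, Finset.mem_cons_self a s, i, Finset.mem_cons_of_mem hi, ?_⟩
      rw [← inf_assoc, inf_eq_left, inf_comm]
      exact h
    · refine ⟨a, Finset.mem_cons_self a s, j, Finset.mem_cons_of_mem hj, ?_⟩
      rw [inf_left_comm, inf_eq_right, inf_comm]
      exact h

lemma IsTreeOrder.inf_eq_inf_of_le_of_not_le (htree : IsTreeOrder α) {r v w : α} (hrv : r ≤ v)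
    (hrw : ¬ r ≤ w) : v ⊓ w = r ⊓ w := by
  refine le_antisymm (le_inf ?_ inf_le_right) (inf_le_inf_right w hrv)
  exact (htree v (v ⊓ w) r inf_le_left hrv).resolve_right fun h => hrw (h.trans inf_le_right)

lemma IsTreeOrder.inf_eq_of_covBy (htree : IsTreeOrder α) {t c v w : α} (htc : t ⋖ c)
    (hcv : c ≤ v) (htw : t ≤ w) (hcw : ¬ c ≤ w) : v ⊓ w = t := by
  have hle : v ⊓ w ≤ c :=
    (htree v _ _ inf_le_left hcv).resolve_right fun h => hcw (h.trans inf_le_right)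
  exact (htc.eq_or_eq (le_inf (htc.le.trans hcv) htw) hle).resolve_right
    fun h => hcw (h ▸ inf_le_right)

lemma IsTreeOrder.eq_of_covBy_of_le (htree : IsTreeOrder α) {t c d x : α} (hc : t ⋖ c)
    (hd : t ⋖ d) (hcx : c ≤ x) (hdx : d ≤ x) : c = d := by
  rcases htree x c d hcx hdx with h | h
  · exact (hd.eq_or_eq hc.le h).resolve_left hc.ne'
  · exact ((hc.eq_or_eq hd.le h).resolve_left hd.ne').symm

end Tree

section DecompTree

variable {T : Type*} [SemilatticeInf T] [OrderBot T] {ℓ : T → Fin 3}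

lemma IsFiniteDecompTree.isTreeOrder (hT : IsFiniteDecompTree ℓ) : IsTreeOrder T :=
  hT.1

lemma IsFiniteDecompTree.label_ne_of_covBy (hT : IsFiniteDecompTree ℓ) {t s : T} (hts : t ⋖ s) :
    ℓ s ≠ ℓ t := by
  obtain ⟨-, hleaf, -, halt⟩ := hT
  have ht : ¬ IsMax t := hts.lt.not_isMax
  have ht2 : ℓ t ≠ 2 := fun h => ht ((hleaf t).1 h)
  by_cases hs : IsMax s
  · rw [(hleaf s).2 hs]
    exact ht2.symm
  · have := halt t s hts ht hs
    omega

lemma IsFiniteDecompTree.exists_isMax_not_le [Finite T] (hT : IsFiniteDecompTree ℓ) {t c : T}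
    (htc : t ⋖ c) : ∃ x, IsMax x ∧ t ≤ x ∧ ¬ c ≤ x := by
  obtain ⟨a, b, hab, hta, htb⟩ := hT.2.2.1 t htc.lt.not_isMax
  obtain ⟨d, htd, hdc⟩ : ∃ d, t ⋖ d ∧ d ≠ c := by
    by_cases hac : a = c
    · exact ⟨b, htb, hac ▸ hab.symm⟩
    · exact ⟨a, hta, hac⟩
  obtain ⟨x, hdx, hx⟩ := exists_le_isMax d
  exact ⟨x, hx, htd.le.trans hdx, fun hcx => hdc (hT.isTreeOrder.eq_of_covBy_of_le htd htc hdx hcx)⟩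

lemma IsFiniteDecompTree.exists_isMax_inf_eq [Finite T] (hT : IsFiniteDecompTree ℓ) (t : T) :
    ∃ x y, IsMax x ∧ IsMax y ∧ x ⊓ y = t := by
  by_cases ht : IsMax t
  · exact ⟨t, t, ht, ht, inf_idem t⟩
  obtain ⟨c, -, -, htc, -⟩ := hT.2.2.1 t ht
  obtain ⟨x, hcx, hx⟩ := exists_le_isMax c
  obtain ⟨y, hy, hty, hcy⟩ := hT.exists_isMax_not_le htc
  exact ⟨x, y, hx, hy, hT.isTreeOrder.inf_eq_of_covBy htc hcx hty hcy⟩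

end DecompTree

section LeafMap

variable {T T' : Type*} [SemilatticeInf T] [SemilatticeInf T'] [Fintype T]

open Classical in
noncomputable def leavesAbove (t : T) : Finset {x : T // IsMax x} :=
  Finset.univ.filter fun v => t ≤ v

lemma mem_leavesAbove {t : T} {v : {x : T // IsMax x}} : v ∈ leavesAbove t ↔ t ≤ v := by
  simp [leavesAbove]

lemma leavesAbove_nonempty (t : T) : (leavesAbove t).Nonempty :=
  let ⟨v, htv, hv⟩ := exists_le_isMax t
  ⟨⟨v, hv⟩, mem_leavesAbove.2 htv⟩

noncomputable def extendLeafMap (g : {x : T // IsMax x} → T') (t : T) : T' :=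
  (leavesAbove t).inf' (leavesAbove_nonempty t) g

variable {g : {x : T // IsMax x} → T'}

lemma extendLeafMap_le {t : T} {v : {x : T // IsMax x}} (htv : t ≤ v) :
    extendLeafMap g t ≤ g v :=
  Finset.inf'_le _ (mem_leavesAbove.2 htv)

lemma extendLeafMap_mono : Monotone (extendLeafMap g) := fun _ _ hts =>
  Finset.le_inf' _ _ fun _ hv => extendLeafMap_le (hts.trans (mem_leavesAbove.1 hv))

lemma extendLeafMap_of_isMax {v : T} (hv : IsMax v) : extendLeafMap g v = g ⟨v, hv⟩ := by
  refine le_antisymm (extendLeafMap_le le_rfl) (Finset.le_inf' _ _ fun u hu => ?_)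
  obtain rfl : u = ⟨v, hv⟩ := Subtype.ext (hv.eq_of_le (mem_leavesAbove.1 hu)).symm
  exact le_rfl

lemma exists_extendLeafMap_eq_inf (htree' : IsTreeOrder T') (t : T) :
    ∃ v w : {x : T // IsMax x}, t ≤ v ∧ t ≤ w ∧ extendLeafMap g t = g v ⊓ g w := by
  obtain ⟨v, hv, w, hw, h⟩ := htree'.exists_inf'_eq_inf (leavesAbove_nonempty t) g
  exact ⟨v, w, mem_leavesAbove.1 hv, mem_leavesAbove.1 hw, h⟩

variable [OrderBot T] {ℓ : T → Fin 3} {ℓ' : T' → Fin 3}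

lemma label_extendLeafMap (hT : IsFiniteDecompTree ℓ) (htree' : IsTreeOrder T')
    (hg : ∀ v w : {x : T // IsMax x}, ℓ' (g v ⊓ g w) = ℓ (v ⊓ w)) (t : T) :
    ℓ' (extendLeafMap g t) = ℓ t := by
  obtain ⟨v, w, htv, htw, hvw⟩ := exists_extendLeafMap_eq_inf htree' t
  rcases (le_inf htv htw : t ≤ (v : T) ⊓ w).eq_or_lt with heq | hlt
  · rw [hvw, hg, heq]
  obtain ⟨c, htc, hcvw⟩ := exists_covBy_le_of_lt hlt
  -- a leaf `x` whose meet with both `v` and `w` is `t`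
  obtain ⟨x, hx, htx, hcx⟩ := hT.exists_isMax_not_le htc
  have hmeet : ∀ u : {x : T // IsMax x}, c ≤ u → ℓ' (g u ⊓ g ⟨x, hx⟩) = ℓ t := fun u hcu => by
    rw [hg, hT.isTreeOrder.inf_eq_of_covBy htc hcu htx hcx]
  have hvwx : g v ⊓ g w ≤ g ⟨x, hx⟩ := hvw ▸ extendLeafMap_le htx
  rcases htree'.inf_eq_inf_or_inf_eq_inf hvwx with h | h
  · rw [hvw, h, hmeet v (hcvw.trans inf_le_left)]
  · rw [hvw, h, hmeet w (hcvw.trans inf_le_right)]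

lemma label_inf_eq_of_extendLeafMap_le (hT : IsFiniteDecompTree ℓ) (htree' : IsTreeOrder T')
    (hg : ∀ v w : {x : T // IsMax x}, ℓ' (g v ⊓ g w) = ℓ (v ⊓ w))
    {t : T} {w : {x : T // IsMax x}} (htw : ¬ t ≤ w) (h : extendLeafMap g t ≤ g w) :
    ℓ (t ⊓ w) = ℓ t := by
  obtain ⟨v₁, v₂, htv₁, htv₂, hv⟩ := exists_extendLeafMap_eq_inf htree' t
  have hmeet : ∀ v : {x : T // IsMax x}, t ≤ v → extendLeafMap g t = g v ⊓ g w →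
      ℓ (t ⊓ w) = ℓ t := fun v htv he => by
    rw [← label_extendLeafMap hT htree' hg t, he, hg,
      hT.isTreeOrder.inf_eq_inf_of_le_of_not_le htv htw]
  rw [hv] at h
  rcases htree'.inf_eq_inf_or_inf_eq_inf h with h' | h'
  · exact hmeet v₁ htv₁ (hv.trans h')
  · exact hmeet v₂ htv₂ (hv.trans h')

lemma le_of_extendLeafMap_le_leaf (hT : IsFiniteDecompTree ℓ) (htree' : IsTreeOrder T')
    (hg : ∀ v w : {x : T // IsMax x}, ℓ' (g v ⊓ g w) = ℓ (v ⊓ w))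
    {t : T} {w : {x : T // IsMax x}} (h : extendLeafMap g t ≤ g w) : t ≤ w := by
  by_contra htw
  obtain ⟨r, hr, hrt⟩ := exists_covBy_le_of_lt (inf_lt_left.2 htw)
  have hrw : ¬ r ≤ w := fun hrw => hr.lt.not_ge (le_inf hrt hrw)
  have hlabel := label_inf_eq_of_extendLeafMap_le hT htree' hg hrw
    ((extendLeafMap_mono hrt).trans h)
  rw [hT.isTreeOrder.inf_eq_of_covBy hr le_rfl inf_le_right hrw] at hlabel
  exact hT.label_ne_of_covBy hr hlabel.symm

lemma le_of_extendLeafMap_le (hT : IsFiniteDecompTree ℓ) (htree' : IsTreeOrder T')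
    (hg : ∀ v w : {x : T // IsMax x}, ℓ' (g v ⊓ g w) = ℓ (v ⊓ w))
    {t s : T} (h : extendLeafMap g t ≤ extendLeafMap g s) : t ≤ s := by
  obtain ⟨x, y, hx, hy, rfl⟩ := hT.exists_isMax_inf_eq s
  exact le_inf
    (le_of_extendLeafMap_le_leaf hT htree' hg (w := ⟨x, hx⟩)
      (h.trans (extendLeafMap_le inf_le_left)))
    (le_of_extendLeafMap_le_leaf hT htree' hg (w := ⟨y, hy⟩)
      (h.trans (extendLeafMap_le inf_le_right)))

end LeafMap

section Cograph

variable {T T' : Type*} [SemilatticeInf T] [SemilatticeInf T'] {ℓ : T → Fin 3} {ℓ' : T' → Fin 3}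

lemma cographOf_adj {v w : {x : T // IsMax x}} :
    (cographOf ℓ).Adj v w ↔ v ≠ w ∧ ℓ (v ⊓ w) = 1 :=
  Iff.rfl

lemma label_inf_eq_of_cographEmbedding (hℓ : ∀ t, ℓ t = 2 ↔ IsMax t)
    (hℓ' : ∀ t, ℓ' t = 2 ↔ IsMax t) (g : cographOf ℓ ↪g cographOf ℓ')
    (v w : {x : T // IsMax x}) : ℓ' ((g v : T') ⊓ g w) = ℓ (v ⊓ w) := by
  by_cases hvw : v = w
  · rw [hvw, inf_idem, inf_idem, (hℓ' _).2 (g w).2, (hℓ _).2 w.2]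
  have hgvw : g v ≠ g w := g.injective.ne hvw
  have h₁ : ℓ (v ⊓ w) ≠ 2 := fun h => not_isMax_inf (Subtype.coe_injective.ne hvw) ((hℓ _).1 h)
  have h₂ : ℓ' ((g v : T') ⊓ g w) ≠ 2 := fun h =>
    not_isMax_inf (Subtype.coe_injective.ne hgvw) ((hℓ' _).1 h)
  have hadj := g.map_adj_iff (v := v) (w := w)
  simp only [cographOf_adj, ne_eq, hvw, hgvw, not_false_eq_true, true_and] at hadj
  omega

lemma injective_of_label_inf_eq (hℓ : ∀ t, ℓ t = 2 ↔ IsMax t) {g : {x : T // IsMax x} → T'}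
    (hg : ∀ v w : {x : T // IsMax x}, ℓ' (g v ⊓ g w) = ℓ (v ⊓ w)) : Function.Injective g := by
  intro v w h
  by_contra hvw
  refine not_isMax_inf (Subtype.coe_injective.ne hvw) ((hℓ _).1 ?_)
  rw [← hg, h, inf_idem, ← inf_idem (g w), hg, inf_idem, (hℓ _).2 w.2]

def cographEmbeddingOfLabelInf (hℓ : ∀ t, ℓ t = 2 ↔ IsMax t) (hℓ' : ∀ t, ℓ' t = 2 ↔ IsMax t)
    (g : {x : T // IsMax x} → T')
    (hg : ∀ v w : {x : T // IsMax x}, ℓ' (g v ⊓ g w) = ℓ (v ⊓ w)) :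
    cographOf ℓ ↪g cographOf ℓ' where
  toFun v := ⟨g v, (hℓ' _).1 (by rw [← inf_idem (g v), hg, inf_idem, (hℓ _).2 v.2])⟩
  inj' v w h := injective_of_label_inf_eq hℓ hg (congrArg Subtype.val h)
  map_rel_iff' {v w} :=
    and_congr (not_congr (Subtype.ext_iff.trans (injective_of_label_inf_eq hℓ hg).eq_iff))
      (by rw [← hg]; rfl)

end Cograph

theorem cograph_embedding_iff_labeled_tree_embedding_general
    {T T' : Type*} [Fintype T]
    [SemilatticeInf T] [OrderBot T] [SemilatticeInf T'] [OrderBot T']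
    (ℓ : T → Fin 3) (ℓ' : T' → Fin 3)
    (hT : IsFiniteDecompTree ℓ) (hT' : IsFiniteDecompTree ℓ') :
    Nonempty (cographOf ℓ ↪g cographOf ℓ') ↔
      ∃ f : T ↪o T',
        (∀ t : T, ℓ' (f t) = ℓ t) ∧
        (∀ v w : T, IsMax v → IsMax w → ℓ' (f v ⊓ f w) = ℓ (v ⊓ w)) := by
  constructor
  · rintro ⟨g⟩
    have hg := label_inf_eq_of_cographEmbedding hT.2.1 hT'.2.1 g
    refine ⟨OrderEmbedding.ofMapLEIff (extendLeafMap fun v => (g v : T')) fun _ _ =>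
        ⟨le_of_extendLeafMap_le hT hT'.isTreeOrder hg, fun h => extendLeafMap_mono h⟩,
      label_extendLeafMap hT hT'.isTreeOrder hg, fun v w hv hw => ?_⟩
    simpa only [OrderEmbedding.coe_ofMapLEIff, extendLeafMap_of_isMax hv,
      extendLeafMap_of_isMax hw] using hg ⟨v, hv⟩ ⟨w, hw⟩
  · rintro ⟨f, -, hmeet⟩
    exact ⟨cographEmbeddingOfLabelInf hT.2.1 hT'.2.1 (fun v => f v) fun v w => hmeet v w v.2 w.2⟩

/-- Let `T`, `T'` be finite decomposition trees with labelings `ℓ`, `ℓ'`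
and associated cographs `G(T)`, `G(T')`. Then `G(T)` embeds into `G(T')` (as an induced
subgraph) iff there is an injective order-embedding `f : T ↪o T'` (`t ≤ s ↔ f t ≤ f s`)
preserving labels (`ℓ' (f t) = ℓ t` for all `t`) and preserving the labels of meets of
leaves (`ℓ' (f v ⊓ f w) = ℓ (v ⊓ w)` for all leaves `v`, `w`). -/
theorem cograph_embedding_iff_labeled_tree_embedding
    {T T' : Type*} [Fintype T] [Fintype T']
    [SemilatticeInf T] [OrderBot T] [SemilatticeInf T'] [OrderBot T']
    (ℓ : T → Fin 3) (ℓ' : T' → Fin 3)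
    (hT : IsFiniteDecompTree ℓ) (hT' : IsFiniteDecompTree ℓ') :
    Nonempty (cographOf ℓ ↪g cographOf ℓ') ↔
      ∃ f : T ↪o T',
        (∀ t : T, ℓ' (f t) = ℓ t) ∧
        (∀ v w : T, IsMax v → IsMax w → ℓ' (f v ⊓ f w) = ℓ (v ⊓ w)) :=
  cograph_embedding_iff_labeled_tree_embedding_general ℓ ℓ' hT hT'
end
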